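/- arXiv:2107.08084 — 3 statements merged into one kernel-verified Lean document; each statement's English description precedes it below -/
import Mathlib

section
/- Let L be an n-dimensional linear subspace of R^d with n < d. If the Plücker coordinates of L (the n×n minors of a matrix whose rows form a basis of L) are linearly independent over Q, then L intersects every rational subspace of R^d of dimension d−n trivially (i.e., only in {0}). -/
/-- A vector in `ℝ^d` has integer coordinates. -/
def IsIntegerVec {d : ℕ} (v : Fin d → ℝ) : Prop := ∀ i, ∃ k : ℤ, v i = (k : ℝ)

/-- A subspace of `ℝ^d` is rational if it has a basis consisting of integer vectors. -/
def IsRationalSubspace {d : ℕ} (M : Submodule ℝ (Fin d → ℝ)) : Prop :=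
  ∃ s : Set (Fin d → ℝ), s.Finite ∧ (∀ v ∈ s, IsIntegerVec v) ∧
    LinearIndependent ℝ ((↑) : s → (Fin d → ℝ)) ∧ Submodule.span ℝ s = M

open Matrix

private lemma exists_strictMono_minor_ne_zero {K : Type*} [Field K] {n d : ℕ} (hnd : n ≤ d)
    (Q : Matrix (Fin n) (Fin d) K) (h : LinearIndependent K (fun i => Q i)) :
    ∃ g : Fin n → Fin d, StrictMono g ∧ (Q.submatrix id g).det ≠ 0 := by
  classical
  have hrank : Q.rank = n := by simpa using h.rank_matrix
  have hspan : Submodule.span K (Set.range Qᵀ) = ⊤ := by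
    apply Submodule.eq_top_of_finrank_eq
    rw [show Set.range Qᵀ = Set.range Q.col from rfl, ← Matrix.rank_eq_finrank_span_cols, hrank, Module.finrank_pi]
    simp
  obtain ⟨t, hts, htspan, htli⟩ := exists_linearIndependent K (Set.range Qᵀ)
  rw [hspan] at htspan
  haveI : Fintype t := (Set.Finite.fintype (htli.setFinite))
  have hcard : t.toFinset.card = n := by
    have h1 := finrank_span_set_eq_card htli
    rw [htspan] at h1
    rw [← h1, finrank_top, Module.finrank_pi]
    simp
  have hcard' : Fintype.card t = n := by rwa [Set.toFinset_card] at hcard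
  obtain ⟨e0⟩ : Nonempty (Fin n ≃ t) := ⟨(Fintype.equivFinOfCardEq hcard').symm⟩
  have hj : ∀ y : t, ∃ jy : Fin d, Qᵀ jy = (y : Fin n → K) := fun y => hts y.2
  choose j hjv using hj
  set f : Fin n → Fin d := fun i => j (e0 i) with hf
  have hcolf : ∀ i, Qᵀ (f i) = ((e0 i : t) : Fin n → K) := fun i => hjv (e0 i)
  have hfinj : Function.Injective f := by
    intro i i' hii
    apply e0.injective
    apply Subtype.ext
    rw [← hcolf i, ← hcolf i', hii]
  -- monotone reparametrization
  set S : Finset (Fin d) := Finset.univ.image f with hS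
  have hScard : S.card = n := by
    rw [hS, Finset.card_image_of_injective _ hfinj, Finset.card_univ, Fintype.card_fin]
  set g : Fin n → Fin d := fun i => S.orderEmbOfFin hScard i with hg
  have hgmono : StrictMono g := (S.orderEmbOfFin hScard).strictMono
  have hgmem : ∀ i, g i ∈ S := fun i => Finset.orderEmbOfFin_mem S hScard i
  have hσ : ∀ i, ∃ i', f i' = g i := by
    intro i
    have := hgmem i
    rw [hS, Finset.mem_image] at this
    obtain ⟨i', _, hi'⟩ := this
    exact ⟨i', hi'⟩
  choose σ hσv using hσ
  have hσinj : Function.Injective σ := by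
    intro a b hab
    apply hgmono.injective
    rw [← hσv a, ← hσv b, hab]
  -- columns of the submatrix are linearly independent
  have hli2 : LinearIndependent K (fun i => Qᵀ (g i)) := by
    have : (fun i => Qᵀ (g i)) = (fun i => ((e0 i : t) : Fin n → K)) ∘ σ := by
      funext i
      simp only [Function.comp_apply, ← hσv i, hcolf]
    rw [this]
    exact (htli.comp e0 e0.injective).comp σ hσinj
  refine ⟨g, hgmono, ?_⟩
  have hunit : IsUnit (Qᵀ.submatrix g id) := by
    rw [← Matrix.linearIndependent_rows_iff_isUnit]
    exact hli2
  have : (Q.submatrix id g).det = (Qᵀ.submatrix g id).det := by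
    rw [← Matrix.det_transpose (Q.submatrix id g), Matrix.transpose_submatrix]
  rw [this]
  have := hunit.map Matrix.detMonoidHom
  simpa using this.ne_zero

private lemma alt_expand {n d : ℕ} [Fintype {g : Fin n → Fin d // StrictMono g}]
    (F : (Fin d → ℝ) [⋀^Fin n]→ₗ[ℝ] ℝ) (v : Fin n → Fin d → ℝ) :
    F v = ∑ g : {g : Fin n → Fin d // StrictMono g},
      ((Matrix.of v).submatrix id g.1).det * F (fun i => Pi.single (g.1 i) 1) := by
  classical
  have h1 : F v = ∑ f : Fin n → Fin d,
      (∏ i, v i (f i)) • F (fun i => Pi.single (f i) (1 : ℝ)) := by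
    have hv : v = fun i => ∑ k, v i k • (Pi.single k (1:ℝ) : Fin d → ℝ) := by
      funext i
      rw [show (∑ k, v i k • (Pi.single k (1:ℝ) : Fin d → ℝ)) = ∑ k, Pi.single k (v i k) by
        refine Finset.sum_congr rfl fun k _ => ?_
        ext l
        by_cases hkl : k = l <;> simp [Pi.single_apply, hkl]]
      exact (Finset.univ_sum_single (v i)).symm
    conv_lhs => rw [hv]
    rw [show (F fun i => ∑ k, v i k • (Pi.single k (1:ℝ) : Fin d → ℝ))
        = F.toMultilinearMap (fun i => ∑ k, (fun i' k' => v i' k' • (Pi.single k' (1:ℝ) : Fin d → ℝ)) i k) from rfl,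
      MultilinearMap.map_sum]
    refine Finset.sum_congr rfl fun f _ => ?_
    exact F.toMultilinearMap.map_smul_univ (fun i => v i (f i)) (fun i => Pi.single (f i) 1)
  -- kill non-injective terms
  have h2 : F v = ∑ f ∈ Finset.univ.filter (fun f : Fin n → Fin d => Function.Injective f),
      (∏ i, v i (f i)) • F (fun i => Pi.single (f i) (1 : ℝ)) := by
    rw [h1]
    symm
    apply Finset.sum_subset (Finset.filter_subset _ _)
    intro f _ hf
    rw [Finset.mem_filter] at hf
    push_neg at hf
    have hninj : ¬ Function.Injective f := fun h => hf (Finset.mem_univ f) h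
    rw [Function.not_injective_iff] at hninj
    obtain ⟨a, b, hab, hne⟩ := hninj
    rw [F.map_eq_zero_of_eq _ (by rw [hab]) hne, smul_zero]
  have h3 : F v = ∑ f : {f : Fin n → Fin d // Function.Injective f},
      (∏ i, v i (f.1 i)) • F (fun i => Pi.single (f.1 i) (1 : ℝ)) := by
    rw [h2]
    exact Finset.sum_subtype _ (by simp) _
  -- group injective maps as strict mono ∘ permutation
  let Φfun : {g : Fin n → Fin d // StrictMono g} × Equiv.Perm (Fin n) →
      {f : Fin n → Fin d // Function.Injective f} :=
    fun p => ⟨p.1.1 ∘ p.2, p.1.2.injective.comp p.2.injective⟩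
  have hΦinj : Function.Injective Φfun := by
    rintro ⟨g, σ⟩ ⟨g', σ'⟩ hp
    have h0 : g.1 ∘ σ = g'.1 ∘ σ' := congrArg Subtype.val hp
    have hrange : Set.range g.1 = Set.range g'.1 := by
      rw [← σ.surjective.range_comp g.1, ← σ'.surjective.range_comp g'.1, h0]
    haveI : WellFoundedLT (Fin n) := inferInstance
    have hg : g.1 = g'.1 := (g.2.range_inj g'.2).1 hrange
    have hσ : σ = σ' := by
      refine Equiv.ext fun i => g.2.injective ?_
      have h1 := congrFun h0 i
      rw [Function.comp_apply, Function.comp_apply, ← hg] at h1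
      exact h1
    simp only [Prod.mk.injEq]
    exact ⟨Subtype.ext hg, hσ⟩
  have hΦsurj : Function.Surjective Φfun := by
    rintro ⟨f, hf⟩
    have hScard : (Finset.univ.image f).card = n := by
      rw [Finset.card_image_of_injective _ hf, Finset.card_univ, Fintype.card_fin]
    set S : Finset (Fin d) := Finset.univ.image f with hS
    have hmem : ∀ i, f i ∈ S := fun i => by simp [hS]
    set σ0 : Fin n → Fin n := fun i => (S.orderIsoOfFin hScard).symm ⟨f i, hmem i⟩ with hσ0
    have hgσ : ∀ i, S.orderEmbOfFin hScard (σ0 i) = f i := by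
      intro i
      rw [hσ0, ← Finset.coe_orderIsoOfFin_apply, OrderIso.apply_symm_apply]
    have hσ0inj : Function.Injective σ0 := by
      intro a b hab
      apply hf
      rw [← hgσ a, ← hgσ b, hab]
    refine ⟨⟨⟨fun i => S.orderEmbOfFin hScard i, (S.orderEmbOfFin hScard).strictMono⟩,
      Equiv.ofBijective σ0 ((Finite.injective_iff_bijective).mp hσ0inj)⟩,
      Subtype.ext (funext fun i => hgσ i)⟩
  let Φ := Equiv.ofBijective Φfun ⟨hΦinj, hΦsurj⟩
  rw [h3, ← Equiv.sum_comp Φ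
    (fun f : {f : Fin n → Fin d // Function.Injective f} =>
      (∏ i, v i (f.1 i)) • F (fun i => Pi.single (f.1 i) (1 : ℝ))),
    Fintype.sum_prod_type]
  refine Finset.sum_congr rfl fun g _ => ?_
  have hdet : ((Matrix.of v).submatrix id g.1).det
      = ∑ σ : Equiv.Perm (Fin n), ((Equiv.Perm.sign σ : ℤ) : ℝ) * ∏ i, v i (g.1 (σ i)) := by
    rw [← Matrix.det_transpose, Matrix.det_apply']
    refine Finset.sum_congr rfl fun σ _ => ?_
    simp [Matrix.transpose_apply, Matrix.submatrix_apply]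
  rw [hdet, Finset.sum_mul]
  refine Finset.sum_congr rfl fun σ _ => ?_
  have hΦval : (Φ (g, σ)).1 = g.1 ∘ σ := rfl
  rw [hΦval]
  have hperm : (fun i => (Pi.single ((g.1 ∘ σ) i) (1:ℝ) : Fin d → ℝ))
      = (fun i => (Pi.single (g.1 i) (1:ℝ) : Fin d → ℝ)) ∘ σ := rfl
  rw [hperm, AlternatingMap.map_perm]
  simp only [Function.comp_apply, smul_eq_mul, Units.smul_def, zsmul_eq_mul]
  push_cast
  ring

/-- If the Plücker coordinates (the `n × n` minors of a matrix whose rows form a basis)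
of an `n`-dimensional subspace `L ⊆ ℝ^d` are linearly independent over `ℚ`, then `L`
intersects every rational subspace of dimension `d - n` trivially. -/
theorem stmt0 {n d : ℕ} (hnd : n < d) (L : Submodule ℝ (Fin d → ℝ))
    (hLdim : Module.finrank ℝ L = n)
    (α : Fin n → Fin d → ℝ)
    (hα_indep : LinearIndependent ℝ α)
    (hα_span : Submodule.span ℝ (Set.range α) = L)
    (hplucker : LinearIndependent ℚ
      (fun g : {g : Fin n → Fin d // StrictMono g} =>
        ((Matrix.of α).submatrix id g.1).det))
    (M : Submodule ℝ (Fin d → ℝ)) (hM : IsRationalSubspace M)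
    (hMdim : Module.finrank ℝ M = d - n) :
    L ⊓ M = ⊥ := by
  classical
  by_contra hbot
  obtain ⟨x, hxmem, hxne⟩ := Submodule.ne_bot_iff _ |>.mp hbot
  obtain ⟨hxL, hxM⟩ := Submodule.mem_inf.mp hxmem
  -- write x in terms of α
  rw [← hα_span] at hxL
  obtain ⟨c, hc⟩ := Submodule.mem_span_range_iff_exists_fun ℝ |>.mp hxL
  have hcne : c ≠ 0 := by
    rintro rfl
    apply hxne
    rw [← hc]
    simp
  -- rational data for M
  obtain ⟨s, hsfin, hsint, hsli, hsspan⟩ := hM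
  haveI : Fintype s := hsfin.fintype
  set m : ℕ := d - n with hm
  have hcard' : Fintype.card s = m := by
    have h1 := finrank_span_set_eq_card hsli
    rw [hsspan, hMdim] at h1
    rw [← Set.toFinset_card, h1]
  have e0 : Fin m ≃ s := (Fintype.equivFinOfCardEq hcard').symm
  set β : Fin m → (Fin d → ℝ) := fun j => ((e0 j : s) : Fin d → ℝ) with hβ
  have hβli : LinearIndependent ℝ β := hsli.comp e0 e0.injective
  have hrat : ∀ j k, ∃ qq : ℚ, β j k = (qq : ℝ) := by
    intro j k
    obtain ⟨z, hz⟩ := hsint _ (e0 j).2 k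
    refine ⟨(z : ℚ), ?_⟩
    rw [show β j k = ((z : ℤ) : ℝ) from hz]
    norm_cast
  choose b hb using hrat
  set S : Matrix (Fin m) (Fin d) ℚ := Matrix.of b with hSmat
  -- rows of S are ℚ-linearly independent
  have hSli : LinearIndependent ℚ (fun j => S j) := by
    rw [Fintype.linearIndependent_iff]
    intro u hu j
    have hu' : ∑ j', (u j' : ℝ) • β j' = 0 := by
      funext k
      have h1 := congrFun hu k
      simp only [Finset.sum_apply, Pi.smul_apply, Pi.zero_apply, smul_eq_mul] at h1 ⊢
      have : ∀ j', (u j' : ℝ) * β j' k = ((u j' * S j' k : ℚ) : ℝ) := by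
        intro j'
        rw [hb j' k]
        push_cast
        rfl
      rw [Finset.sum_congr rfl fun j' _ => this j']
      rw [← Rat.cast_sum]
      rw [h1, Rat.cast_zero]
    have := Fintype.linearIndependent_iff.mp hβli (fun j' => (u j' : ℝ)) hu' j
    exact_mod_cast this
  -- kernel of S has dimension n over ℚ
  have hSrank : S.rank = m := by simpa using hSli.rank_matrix
  have hker : Module.finrank ℚ (LinearMap.ker S.mulVecLin) = n := by
    have h1 := LinearMap.finrank_range_add_finrank_ker S.mulVecLin
    rw [show Module.finrank ℚ (LinearMap.range S.mulVecLin) = S.rank from rfl, hSrank] at h1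
    rw [Module.finrank_pi] at h1
    simp only [Fintype.card_fin] at h1
    omega
  -- basis of the kernel
  set Kker := LinearMap.ker S.mulVecLin with hKker
  haveI : FiniteDimensional ℚ Kker := inferInstance
  set u : Module.Basis (Fin n) ℚ Kker := (Module.finBasis ℚ Kker).reindex (finCongr hker) with hu
  set q : Fin n → (Fin d → ℚ) := fun i => ((u i : Kker) : Fin d → ℚ) with hq
  have hqli : LinearIndependent ℚ q :=
    u.linearIndependent.map' Kker.subtype (Submodule.ker_subtype Kker)
  have hqker : ∀ i, S.mulVec (q i) = 0 := fun i => (u i).2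
  set Q : Matrix (Fin n) (Fin d) ℚ := Matrix.of q with hQ
  set W : Matrix (Fin n) (Fin d) ℝ := Q.map (fun a : ℚ => (a : ℝ)) with hW
  set T : (Fin d → ℝ) →ₗ[ℝ] (Fin n → ℝ) := W.mulVecLin with hT
  -- T vanishes on M
  have hTM : ∀ y ∈ M, T y = 0 := by
    have hle : M ≤ LinearMap.ker T := by
      rw [← hsspan, Submodule.span_le]
      intro y hy
      have hyβ : ∃ j, β j = y := ⟨e0.symm ⟨y, hy⟩, by simp [hβ]⟩
      obtain ⟨j, rfl⟩ := hyβ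
      simp only [SetLike.mem_coe, LinearMap.mem_ker]
      funext i
      have h0 : ∑ k, b j k * q i k = 0 := by
        have h1 := congrFun (hqker i) j
        simp only [Matrix.mulVec, dotProduct, Pi.zero_apply] at h1
        simpa [hSmat] using h1
      show (W.mulVec (β j)) i = 0
      simp only [Matrix.mulVec, dotProduct]
      have : ∀ k, W i k * β j k = ((q i k * b j k : ℚ) : ℝ) := by
        intro k
        rw [hb j k]
        push_cast
        rfl
      rw [Finset.sum_congr rfl fun k _ => this k, ← Rat.cast_sum]
      rw [show (∑ k, q i k * b j k) = ∑ k, b j k * q i k by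
        exact Finset.sum_congr rfl fun k _ => mul_comm _ _, h0, Rat.cast_zero]
    intro y hy
    exact LinearMap.mem_ker.mp (hle hy)
  -- the alternating form
  set F : (Fin d → ℝ) [⋀^Fin n]→ₗ[ℝ] ℝ := Matrix.detRowAlternating.compLinearMap T with hF
  -- F α = det (of α * Wᵀ)
  have hFα : F α = (Matrix.of α * Wᵀ).det := by
    rw [hF, AlternatingMap.compLinearMap_apply]
    congr 1
    ext i jj
    simp [hT, Matrix.mulVecLin_apply, Matrix.mul_apply, Matrix.mulVec, dotProduct, mul_comm]
  -- det (of α * Wᵀ) = 0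
  have hdet0 : (Matrix.of α * Wᵀ).det = 0 := by
    by_contra hne
    apply hcne
    apply Matrix.eq_zero_of_vecMul_eq_zero hne
    have h1 : c ᵥ* (Matrix.of α * Wᵀ) = (c ᵥ* Matrix.of α) ᵥ* Wᵀ := by
      rw [Matrix.vecMul_vecMul]
    rw [h1]
    have h2 : c ᵥ* Matrix.of α = x := by
      funext k
      rw [← hc]
      simp [Matrix.vecMul, dotProduct]
    rw [h2, Matrix.vecMul_transpose]
    exact hTM x hxM
  -- expansion of F α via Plücker coordinates
  have hexp := alt_expand F α
  have hsingle : ∀ g : {g : Fin n → Fin d // StrictMono g},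
      F (fun i => Pi.single (g.1 i) (1:ℝ)) = ((Q.submatrix id g.1).det : ℝ) := by
    intro g
    rw [hF, AlternatingMap.compLinearMap_apply]
    have h1 : (fun i => T (Pi.single (g.1 i) (1:ℝ))) = fun i => Wᵀ (g.1 i) := by
      funext i
      rw [hT, Matrix.mulVecLin_apply, Matrix.mulVec_single_one]
      rfl
    rw [h1]
    have h2 : Matrix.detRowAlternating (fun i => Wᵀ (g.1 i)) = (Wᵀ.submatrix g.1 id).det := rfl
    rw [h2, ← Matrix.transpose_submatrix, Matrix.det_transpose]
    rw [hW, Matrix.submatrix_map]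
    rw [show ((fun a : ℚ => (a : ℝ))) = ⇑(Rat.castHom ℝ) from rfl]
    exact (RingHom.map_det (Rat.castHom ℝ) (Q.submatrix id g.1)).symm
  have hrel : ∑ g : {g : Fin n → Fin d // StrictMono g},
      ((Q.submatrix id g.1).det) • ((Matrix.of α).submatrix id g.1).det = 0 := by
    have h1 : ∑ g : {g : Fin n → Fin d // StrictMono g},
        ((Matrix.of α).submatrix id g.1).det * F (fun i => Pi.single (g.1 i) 1) = 0 := by
      rw [← hexp, hFα, hdet0]
    rw [← h1]
    refine Finset.sum_congr rfl fun g _ => ?_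
    rw [hsingle g, Rat.smul_def, mul_comm]
  have hzero := Fintype.linearIndependent_iff.mp hplucker
    (fun g => (Q.submatrix id g.1).det) hrel
  obtain ⟨g0, hg0mono, hg0det⟩ :=
    exists_strictMono_minor_ne_zero (le_of_lt hnd) Q (by exact hqli)
  exact hg0det (hzero ⟨g0, hg0mono⟩)
end

section
/- If ξ = (ξ_1, ..., ξ_{d−1}, 1) lies in an n-dimensional completely irrational subspace L of R^d, then the Q-linear dimension of the set of coordinates {ξ_1, ..., ξ_{d−1}, 1} is at least d − n. -/
open Module Submodule Set

lemma isIntegerVec_single {d : ℕ} (i : Fin d) : IsIntegerVec (Pi.single i (1 : ℝ)) := fun j =>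
  ⟨(Pi.single i 1 : Fin d → ℤ) j, by simp [Pi.single_apply, apply_ite]⟩

lemma exists_isIntegerVec_mem_span_ratCast {d : ℕ} (v : Fin d → ℚ) :
    ∃ w, IsIntegerVec w ∧ (fun i => (v i : ℝ)) ∈ ℝ ∙ w := by
  obtain ⟨⟨N, hN0⟩, hNv⟩ := IsLocalization.exist_integer_multiples_of_finite (nonZeroDivisors ℤ) v
  have hN : (N : ℝ) ≠ 0 := by exact_mod_cast nonZeroDivisors.ne_zero hN0
  refine ⟨(N : ℝ) • fun i => (v i : ℝ), fun i => ?_, ?_⟩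
  · obtain ⟨z, hz⟩ := hNv i
    refine ⟨z, ?_⟩
    simp only [zsmul_eq_mul, algebraMap_int_eq, eq_intCast] at hz
    simp only [Pi.smul_apply, smul_eq_mul]
    exact_mod_cast hz.symm
  · rw [span_singleton_smul_eq (isUnit_iff_ne_zero.2 hN)]
    exact mem_span_singleton_self _

lemma LinearIndepOn.finrank_span_eq_ncard {K V : Type*} [DivisionRing K] [AddCommGroup V]
    [Module K V] [FiniteDimensional K V] {s : Set V} (hs : LinearIndepOn K id s) :
    finrank K (span K s) = s.ncard := by
  have := hs.setFinite.fintype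
  rw [finrank_span_set_eq_card hs, ncard_eq_toFinset_card']

lemma exists_ratCast_mem_span {ι : Type*} [Finite ι] (ξ : ι → ℝ) :
    ∃ r : Fin (finrank ℚ (span ℚ (range ξ))) → ι → ℚ,
      ξ ∈ span ℝ (range fun j i => (r j i : ℝ)) := by
  have := FiniteDimensional.span_of_finite ℚ (finite_range ξ)
  let b := finBasis ℚ (span ℚ (range ξ))
  let coord (i : ι) : span ℚ (range ξ) := ⟨ξ i, subset_span (mem_range_self i)⟩
  let r j i := b.repr (coord i) j
  have hξ : ξ = ∑ j, (b j : ℝ) • fun i => (r j i : ℝ) := by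
    funext i
    have hi := congrArg Subtype.val (b.sum_repr (coord i))
    simp only [AddSubmonoidClass.coe_finsetSum, SetLike.val_smul, Rat.smul_def] at hi
    simp only [Finset.sum_apply, Pi.smul_apply, smul_eq_mul, mul_comm (b _ : ℝ)]
    exact hi.symm
  have := sum_smul_mem (span ℝ (range fun j i => (r j i : ℝ))) (t := Finset.univ)
    (fun j => (b j : ℝ)) fun j _ => subset_span (mem_range_self j)
  exact ⟨r, by rwa [← hξ] at this⟩

lemma isRationalSubspace_span {d : ℕ} {S : Set (Fin d → ℝ)} (hS : S.Finite)
    (hSint : ∀ v ∈ S, IsIntegerVec v) : IsRationalSubspace (span ℝ S) := by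
  obtain ⟨s, hsS, hspan, hli⟩ := exists_linearIndependent ℝ S
  exact ⟨s, hS.subset hsS, fun v hv => hSint v (hsS hv), hli, hspan⟩

lemma IsRationalSubspace.exists_le_finrank_eq {d k : ℕ} {W : Submodule ℝ (Fin d → ℝ)}
    (hW : IsRationalSubspace W) (hWk : finrank ℝ W ≤ k) (hkd : k ≤ d) :
    ∃ M, IsRationalSubspace M ∧ W ≤ M ∧ finrank ℝ M = k := by
  obtain ⟨s, -, hsint, hsli, rfl⟩ := hW
  set T := s ∪ range fun i => Pi.single i (1 : ℝ)
  have hTint : ∀ v ∈ T, IsIntegerVec v := by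
    rintro v (hv | ⟨i, rfl⟩)
    exacts [hsint v hv, isIntegerVec_single i]
  have hTspan : span ℝ T = ⊤ := by
    refine eq_top_iff.2 ((Pi.basisFun ℝ (Fin d)).span_eq.ge.trans (span_mono ?_))
    rintro _ ⟨i, rfl⟩
    exact Or.inr ⟨i, by simp⟩
  have hsli' : LinearIndepOn ℝ id s := hsli
  have hsT : s ⊆ T := subset_union_left
  set B := hsli'.extend hsT
  have hBli := hsli'.linearIndepOn_extend hsT
  have hBcard : B.ncard = d := by
    rw [← hBli.finrank_span_eq_ncard, hsli'.span_extend_eq_span, hTspan, finrank_top,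
      finrank_fin_fun]
  obtain ⟨u, hsu, huB, hucard⟩ := exists_subsuperset_card_eq (hsli'.subset_extend hsT)
    (hsli'.finrank_span_eq_ncard ▸ hWk) (hBcard.symm ▸ hkd)
  have huli := hBli.mono huB
  refine ⟨span ℝ u, ⟨u, huli.finite, fun v hv => hTint v (hsli'.extend_subset _ (huB hv)), huli,
    rfl⟩, span_mono hsu, huli.finrank_span_eq_ncard.trans hucard⟩

lemma exists_isRationalSubspace_mem_finrank_le {d : ℕ} (ξ : Fin d → ℝ) :
    ∃ W, IsRationalSubspace W ∧ ξ ∈ W ∧ finrank ℝ W ≤ finrank ℚ (span ℚ (range ξ)) := by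
  obtain ⟨r, hξr⟩ := exists_ratCast_mem_span ξ
  choose w hwint hwr using fun j => exists_isIntegerVec_mem_span_ratCast (r j)
  have hrw : span ℝ (range fun j i => (r j i : ℝ)) ≤ span ℝ (range w) :=
    span_le.2 <| range_subset_iff.2 fun j =>
      span_le.2 (singleton_subset_iff.2 (subset_span (mem_range_self j))) (hwr j)
  refine ⟨span ℝ (range w), isRationalSubspace_span (finite_range w) ?_, hrw hξr, ?_⟩
  · rintro _ ⟨j, rfl⟩
    exact hwint j
  · exact (finrank_range_le_card (R := ℝ) w).trans_eq (Fintype.card_fin _)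

/-- If `ξ = (ξ_1, ..., ξ_{d−1}, 1)` lies in an `n`-dimensional completely irrational subspace
`L ⊆ ℝ^d` (one meeting every rational subspace of dimension `d − n` only in `{0}`), then the
`ℚ`-linear dimension of the span of the coordinates `ξ_1, ..., ξ_{d−1}, 1` is at least `d − n`. -/
theorem stmt13 (d n : ℕ) (hnd : n < d)
    (L : Submodule ℝ (Fin d → ℝ))
    (hCI : ∀ M : Submodule ℝ (Fin d → ℝ),
      IsRationalSubspace M → Module.finrank ℝ M = d - n → L ⊓ M = ⊥)
    (ξ : Fin d → ℝ) (hlast : ξ ⟨d - 1, by omega⟩ = 1) (hξL : ξ ∈ L) :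
    d - n ≤ Module.finrank ℚ (Submodule.span ℚ (Set.range ξ)) := by
  by_contra! hlt
  obtain ⟨W, hW, hξW, hWdim⟩ := exists_isRationalSubspace_mem_finrank_le ξ
  obtain ⟨M, hM, hWM, hMdim⟩ := hW.exists_le_finrank_eq (hWdim.trans hlt.le) (Nat.sub_le d n)
  have hξ0 : ξ ∈ L ⊓ M := ⟨hξL, hWM hξW⟩
  rw [hCI M hM hMdim, mem_bot] at hξ0
  simp [hξ0] at hlast
end

section
/- Let L be an n-dimensional completely irrational subspace of R^d and let (z_ν) be a sequence of nonzero integer vectors with |z_ν| → ∞ and dist(z_ν, L) → 0 (a sequence of best approximations to L). Then the z_ν cannot all eventually lie in a single linear subspace B of dimension d − n; in particular R(L) ≥ d − n + 1, where R(L) is the minimal dimension of a subspace containing all but finitely many z_ν. -/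
open Filter

/-- A vector in Euclidean `ℝ^d` has integer coordinates. -/
def IsIntegerVecE {d : ℕ} (v : EuclideanSpace ℝ (Fin d)) : Prop := ∀ i, ∃ k : ℤ, v i = (k : ℝ)

/-- A subspace of `ℝ^d` is rational if it has a basis consisting of integer vectors. -/
def IsRationalSubspaceE {d : ℕ} (M : Submodule ℝ (EuclideanSpace ℝ (Fin d))) : Prop :=
  ∃ s : Set (EuclideanSpace ℝ (Fin d)), s.Finite ∧ (∀ v ∈ s, IsIntegerVecE v) ∧
    LinearIndependent ℝ ((↑) : s → EuclideanSpace ℝ (Fin d)) ∧ Submodule.span ℝ s = M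

/-!
If the `z ν` eventually lay in a subspace `B` of dimension at most `d - n`, the integer vectors of
`B` could be completed by integer vectors to a rational subspace `M` of dimension exactly `d - n`,
still containing the tail of `(z ν)`. Complete irrationality gives `L ⊓ M = ⊥`, so on `M` the
distance to `L` dominates a fixed multiple of the norm; this is incompatible with `‖z ν‖ → ∞` and
`dist(z ν, L) → 0`.
-/

open Metric

section Approximation

variable {𝕜 E : Type*} [NontriviallyNormedField 𝕜] [CompleteSpace 𝕜]
  [NormedAddCommGroup E] [NormedSpace 𝕜 E]

/-- The quotient norm of `E ⧸ L` is `infDist · L`, and `L ⊓ M = ⊥` makes `M → E ⧸ L` injective,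
hence antilipschitz as `M` is finite-dimensional. -/
theorem Submodule.exists_norm_le_mul_infDist_of_inf_eq_bot {L M : Submodule 𝕜 E}
    [FiniteDimensional 𝕜 M] (hL : IsClosed (L : Set E)) (hLM : L ⊓ M = ⊥) :
    ∃ C : ℝ, ∀ x ∈ M, ‖x‖ ≤ C * infDist x L := by
  have : IsClosed (L : Set E) := hL
  have hker : LinearMap.ker (L.mkQ ∘ₗ M.subtype) = ⊥ := by
    rw [LinearMap.ker_comp, Submodule.ker_mkQ, ← Submodule.disjoint_iff_comap_eq_bot,
      disjoint_iff, inf_comm, hLM]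
  obtain ⟨K, -, hK⟩ := (L.mkQ ∘ₗ M.subtype).exists_antilipschitzWith hker
  refine ⟨K, fun x hx => ?_⟩
  have hnorm : ‖L.mkQ x‖ = infDist x L := QuotientAddGroup.norm_mk (S := L.toAddSubgroup) x
  rw [← hnorm]
  exact hK.le_mul_norm (map_zero _) ⟨x, hx⟩

theorem not_eventually_mem_of_inf_eq_bot {ι : Type*} {l : Filter ι} [l.NeBot]
    {L M : Submodule 𝕜 E} [FiniteDimensional 𝕜 M] (hL : IsClosed (L : Set E))
    (hLM : L ⊓ M = ⊥) {z : ι → E} (hgrow : Tendsto (fun i => ‖z i‖) l atTop)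
    (happrox : Tendsto (fun i => infDist (z i) L) l (nhds 0)) :
    ¬ ∀ᶠ i in l, z i ∈ M := by
  intro hM
  obtain ⟨C, hC⟩ := Submodule.exists_norm_le_mul_infDist_of_inf_eq_bot hL hLM
  have hsmall : ∀ᶠ i in l, C * infDist (z i) L < 1 := by
    have : Tendsto (fun i => C * infDist (z i) L) l (nhds 0) := by
      simpa using happrox.const_mul C
    exact this.eventually_lt_const one_pos
  obtain ⟨i, hiM, hi_small, hi_big⟩ :=
    (hM.and (hsmall.and (hgrow.eventually_ge_atTop 1))).exists
  linarith [hC _ hiM]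

end Approximation

section Rational

variable {d : ℕ}

theorem isIntegerVecE_single (i : Fin d) : IsIntegerVecE (EuclideanSpace.single i (1 : ℝ)) :=
  fun j => ⟨if j = i then 1 else 0, by rw [PiLp.single_apply]; split_ifs <;> simp⟩

theorem isRationalSubspaceE_span {s : Set (EuclideanSpace ℝ (Fin d))}
    (hs : ∀ v ∈ s, IsIntegerVecE v) : IsRationalSubspaceE (Submodule.span ℝ s) := by
  obtain ⟨t, hts, hspan, hli⟩ := exists_linearIndependent ℝ s
  exact ⟨t, hli.setFinite, fun v hv => hs v (hts hv), hli, hspan⟩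

theorem exists_isIntegerVecE_notMem {M : Submodule ℝ (EuclideanSpace ℝ (Fin d))}
    (hM : Module.finrank ℝ M < d) : ∃ v, IsIntegerVecE v ∧ v ∉ M := by
  by_contra! h
  have htop : M = ⊤ := by
    rw [eq_top_iff, ← (EuclideanSpace.basisFun (Fin d) ℝ).toBasis.span_eq, Submodule.span_le]
    rintro _ ⟨i, rfl⟩
    simpa using h _ (isIntegerVecE_single i)
  rw [htop, finrank_top, finrank_euclideanSpace_fin] at hM
  exact lt_irrefl d hM

theorem exists_isIntegerVecE_superset_finrank_span_eq {r : ℕ} (hrd : r ≤ d)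
    {s : Set (EuclideanSpace ℝ (Fin d))} (hs : ∀ v ∈ s, IsIntegerVecE v)
    (hsr : Module.finrank ℝ (Submodule.span ℝ s) ≤ r) :
    ∃ t, s ⊆ t ∧ (∀ v ∈ t, IsIntegerVecE v) ∧ Module.finrank ℝ (Submodule.span ℝ t) = r := by
  induction r with
  | zero => exact ⟨s, subset_rfl, hs, by omega⟩
  | succ r ih =>
    rcases hsr.eq_or_lt with hsr | hsr
    · exact ⟨s, subset_rfl, hs, hsr⟩
    obtain ⟨t, hst, ht, htr⟩ := ih (by omega) (by omega)
    obtain ⟨v, hv, hvt⟩ := exists_isIntegerVecE_notMem (M := Submodule.span ℝ t) (by omega)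
    refine ⟨insert v t, hst.trans (Set.subset_insert v t), ?_, ?_⟩
    · rintro w (rfl | hw)
      exacts [hv, ht w hw]
    · rw [Submodule.span_insert, sup_comm, Submodule.finrank_sup_span_singleton hvt, htr]

end Rational

theorem stmt15_general (d n : ℕ)
    (L : Submodule ℝ (EuclideanSpace ℝ (Fin d)))
    (hCI : ∀ M : Submodule ℝ (EuclideanSpace ℝ (Fin d)),
      IsRationalSubspaceE M → Module.finrank ℝ M = d - n → L ⊓ M = ⊥)
    (z : ℕ → EuclideanSpace ℝ (Fin d))
    (hint : ∀ ν, IsIntegerVecE (z ν))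
    (hgrow : Tendsto (fun ν => ‖z ν‖) atTop atTop)
    (happrox : Tendsto (fun ν => Metric.infDist (z ν) (L : Set (EuclideanSpace ℝ (Fin d))))
      atTop (nhds 0)) :
    ∀ B : Submodule ℝ (EuclideanSpace ℝ (Fin d)),
      (∃ ν₀, ∀ ν ≥ ν₀, z ν ∈ B) → d - n + 1 ≤ Module.finrank ℝ B := by
  rintro B ⟨ν₀, hB⟩
  by_contra! hBdim
  set s := {v | v ∈ B ∧ IsIntegerVecE v}
  have hsB : Submodule.span ℝ s ≤ B := Submodule.span_le.mpr fun _ hv => hv.1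
  obtain ⟨t, hst, ht, htr⟩ := exists_isIntegerVecE_superset_finrank_span_eq (Nat.sub_le d n)
    (fun _ hv => hv.2) ((Submodule.finrank_mono hsB).trans (by omega))
  refine not_eventually_mem_of_inf_eq_bot L.closed_of_finiteDimensional
    (hCI _ (isRationalSubspaceE_span ht) htr) hgrow happrox ?_
  filter_upwards [eventually_ge_atTop ν₀] with ν hν
  exact Submodule.subset_span (hst ⟨hB ν hν, hint ν⟩)

/-- Let `L` be an `n`-dimensional completely irrational subspace of `ℝ^d` and `(z_ν)` a
sequence of nonzero integer vectors with `|z_ν| → ∞` and `dist(z_ν, L) → 0`. Then the `z_ν`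
cannot all eventually lie in a subspace of dimension `d − n`; that is, any subspace `B`
containing all but finitely many of the `z_ν` has dimension at least `d − n + 1`
(so `R(L) ≥ d − n + 1`). -/
theorem stmt15 (d n : ℕ) (hn : 0 < n) (hnd : n < d)
    (L : Submodule ℝ (EuclideanSpace ℝ (Fin d))) (hLdim : Module.finrank ℝ L = n)
    (hCI : ∀ M : Submodule ℝ (EuclideanSpace ℝ (Fin d)),
      IsRationalSubspaceE M → Module.finrank ℝ M = d - n → L ⊓ M = ⊥)
    (z : ℕ → EuclideanSpace ℝ (Fin d))
    (hint : ∀ ν, IsIntegerVecE (z ν)) (hnz : ∀ ν, z ν ≠ 0)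
    (hgrow : Tendsto (fun ν => ‖z ν‖) atTop atTop)
    (happrox : Tendsto (fun ν => Metric.infDist (z ν) (L : Set (EuclideanSpace ℝ (Fin d))))
      atTop (nhds 0)) :
    ∀ B : Submodule ℝ (EuclideanSpace ℝ (Fin d)),
      (∃ ν₀, ∀ ν ≥ ν₀, z ν ∈ B) → d - n + 1 ≤ Module.finrank ℝ B :=
  stmt15_general d n L hCI z hint hgrow happrox
end
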